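/- arXiv:2210.04590 — 6 statements merged into one kernel-verified Lean document; each statement's English description precedes it below -/
import Mathlib

section
/- Let s ≥ 3 and t ≥ 1, and let α = (a₁ … a_r b_s … b₁) and β = (c₁ … c_t b_s … b₁) be cyclic permutations on pairwise distinct symbols, where r = 0 (so α = (b_s b_{s-1} … b₁)). Then β α⁻¹ β⁻¹ α = (b_s c_t b₁). -/
/-!
Cutting the long cycle `β` at `b_s`, and (after rotating it) at `b₁`, factors it in Mathlib's
product order as `β = δ * α = α * ε`, where `δ = formPerm (c ++ [b_s])` and
`ε = formPerm (c ++ [b₁])`. Hence `α * β⁻¹ * α⁻¹ * β = δ⁻¹ * ε`, and as `δ` and `ε` only differ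
in the symbol closing the path `c₁ … c_t`, this is the 3-cycle `(b_s c_t b₁)`.
-/

namespace List

variable {α : Type*} [DecidableEq α]

theorem formPerm_append_cons : ∀ (l m : List α) (x : α),
    formPerm (l ++ x :: m) = formPerm (l ++ [x]) * formPerm (x :: m)
  | [], _, _ => by simp
  | [_], _, _ => rfl
  | a :: b :: l, m, x => by
    simpa [mul_assoc] using formPerm_append_cons (b :: l) m x

theorem formPerm_append_pair_inv_mul (l : List α) (z x y : α) :
    (formPerm (l ++ [z, x]))⁻¹ * formPerm (l ++ [z, y]) = formPerm [x, z, y] := by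
  simp [formPerm_append_pair, mul_assoc, Equiv.swap_comm z x]

theorem formPerm_commutator_eq_three_cycle (l m : List α) (x y z : α)
    (h : (l ++ z :: x :: (m ++ [y])).Nodup) :
    formPerm (x :: (m ++ [y])) * (formPerm (l ++ z :: x :: (m ++ [y])))⁻¹ *
        (formPerm (x :: (m ++ [y])))⁻¹ * formPerm (l ++ z :: x :: (m ++ [y])) =
      formPerm [x, z, y] := by
  set A := formPerm (x :: (m ++ [y]))
  set B := formPerm (l ++ z :: x :: (m ++ [y]))
  have hB_left : B = formPerm (l ++ [z, x]) * A := by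
    simpa using formPerm_append_cons (l ++ [z]) (m ++ [y]) x
  have hB_right : B = A * formPerm (l ++ [z, y]) := by
    have hrot : l ++ z :: x :: (m ++ [y]) ~r x :: m ++ y :: (l ++ [z]) := by
      simpa using isRotated_append (l := l ++ [z]) (l' := x :: (m ++ [y]))
    have hnd : (y :: (l ++ [z])).Nodup := (hrot.nodup_iff.mp h).of_append_right
    rw [show B = _ from formPerm_eq_of_isRotated h hrot, formPerm_append_cons,
      formPerm_eq_of_isRotated hnd (by simpa using (isRotated_concat y (l ++ [z])).symm)]
    rfl
  rw [← formPerm_append_pair_inv_mul l z x y]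
  calc A * B⁻¹ * A⁻¹ * B
      = A * (formPerm (l ++ [z, x]) * A)⁻¹ * A⁻¹ * (A * formPerm (l ++ [z, y])) := by
        rw [← hB_left, ← hB_right]
    _ = _ := by group

end List

/-- Case (0,s,t) with s ≥ 3, t ≥ 1: with α = (b_s … b₁) and
β = (c₁ … c_t b_s … b₁) on distinct symbols, the left-to-right product
β α⁻¹ β⁻¹ α equals the 3-cycle (b_s c_t b₁).  Left-to-right composition
σ τ : x ↦ τ(σ(x)) corresponds to the Mathlib product τ * σ. -/
theorem three_cycle_case_0_s_t {X : Type*} [DecidableEq X]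
    (s t : ℕ) (hs : 3 ≤ s) (ht : 1 ≤ t) (b : Fin s → X) (c : Fin t → X)
    (hdist : (List.ofFn b ++ List.ofFn c).Nodup) :
    let α := List.formPerm (List.ofFn b).reverse
    let β := List.formPerm (List.ofFn c ++ (List.ofFn b).reverse)
    α * β⁻¹ * α⁻¹ * β =
      List.formPerm [b ⟨s - 1, by omega⟩, c ⟨t - 1, by omega⟩, b ⟨0, by omega⟩] := by
  intro α β
  obtain ⟨s, rfl⟩ : ∃ s', s = s' + 2 := ⟨s - 2, by omega⟩
  obtain ⟨t, rfl⟩ : ∃ t', t = t' + 1 := ⟨t - 1, by omega⟩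
  have hc : List.ofFn c = List.ofFn (fun i => c i.castSucc) ++ [c ⟨t, by omega⟩] := by
    rw [List.ofFn_succ', List.concat_eq_append]
    rfl
  have hb : (List.ofFn b).reverse = b ⟨s + 1, by omega⟩ ::
      ((List.ofFn fun i : Fin s => b i.castSucc.succ).reverse ++ [b ⟨0, by omega⟩]) := by
    rw [List.ofFn_succ, List.ofFn_succ']
    simp [Fin.last]
  have hnd : (List.ofFn c ++ (List.ofFn b).reverse).Nodup :=
    (List.perm_append_comm.trans ((List.reverse_perm _).append_right _)).nodup_iff.mpr hdist
  rw [hb, hc] at hnd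
  simp only [α, β, hb, hc]
  simp only [List.append_assoc, List.singleton_append] at hnd ⊢
  exact List.formPerm_commutator_eq_three_cycle _ _ _ _ _ hnd
end

section
/- Let s ≥ 3 and let α = (a₁ a₂ b_s … b₁), β = (c₁ c₂ b_s … b₁) be cyclic permutations on pairwise distinct symbols. Then ζ = ((β α⁻¹ β⁻¹ α)^{α})^{ε+β⁻²} equals the 3-cycle (b_{s-1} b₁ c₂); concretely, with σ := α⁻¹ (β α⁻¹ β⁻¹ α) α, we have σ ∘ (β² σ β⁻²) = (b_{s-1} b₁ c₂). -/
open List Equiv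

namespace TC2s2
variable {X : Type*} [DecidableEq X] {s : ℕ}

lemma gE (x y : X) (b : Fin s → X) (k : ℕ) (h2 : 2 ≤ k) (hk : k < s + 2) :
    (x :: y :: (List.ofFn b).reverse)[k]'(by simp; omega) = b ⟨s + 1 - k, by omega⟩ := by
  obtain ⟨j, rfl⟩ : ∃ j, k = j + 2 := ⟨k - 2, by omega⟩
  simp [List.getElem_reverse, List.getElem_ofFn]
  congr 1
  simp only [Fin.mk.injEq]
  omega

lemma pi_x (x y : X) (b : Fin s → X) (hn : (x :: y :: (List.ofFn b).reverse).Nodup) :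
    formPerm (x :: y :: (List.ofFn b).reverse) x = y :=
  formPerm_apply_head _ _ _ hn

lemma pi_y (x y : X) (b : Fin s → X) (hn : (x :: y :: (List.ofFn b).reverse).Nodup)
    (hs : 1 ≤ s) :
    formPerm (x :: y :: (List.ofFn b).reverse) y = b ⟨s - 1, by omega⟩ := by
  have h := formPerm_apply_lt_getElem (x :: y :: (List.ofFn b).reverse) hn 1 (by simp; omega)
  rw [gE x y b 2 (by omega) (by omega)] at h
  simpa using h

lemma pi_b0 (x y : X) (b : Fin s → X) (hn : (x :: y :: (List.ofFn b).reverse).Nodup)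
    (hs : 1 ≤ s) :
    formPerm (x :: y :: (List.ofFn b).reverse) (b ⟨0, by omega⟩) = x := by
  have h := formPerm_apply_getElem (x :: y :: (List.ofFn b).reverse) hn (s + 1) (by simp)
  rw [gE x y b (s+1) (by omega) (by omega)] at h
  have : b ⟨s + 1 - (s+1), by omega⟩ = b ⟨0, by omega⟩ := by
    congr 1; simp only [Fin.mk.injEq]; omega
  rw [this] at h
  rw [h]
  have hl : (x :: y :: (List.ofFn b).reverse).length = s + 2 := by simp
  simp [hl]

lemma pi_bsucc (x y : X) (b : Fin s → X) (hn : (x :: y :: (List.ofFn b).reverse).Nodup)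
    (i j : ℕ) (hi : i < s) (hj : j < s) (hij : j = i + 1) :
    formPerm (x :: y :: (List.ofFn b).reverse) (b ⟨j, hj⟩) = b ⟨i, hi⟩ := by
  subst hij
  have h := formPerm_apply_lt_getElem (x :: y :: (List.ofFn b).reverse) hn (s - i) (by simp)
  rw [gE x y b (s-i) (by omega) (by omega), gE x y b (s-i+1) (by omega) (by omega)] at h
  have e1 : b ⟨s + 1 - (s - i), by omega⟩ = b ⟨i + 1, hj⟩ := by
    congr 1; simp only [Fin.mk.injEq]; omega
  have e2 : b ⟨s + 1 - (s - i + 1), by omega⟩ = b ⟨i, hi⟩ := by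
    congr 1; simp only [Fin.mk.injEq]; omega
  rw [e1, e2] at h
  exact h

lemma inv_of (π : Equiv.Perm X) (u v : X) (h : π u = v) : π⁻¹ v = u := by
  rw [← h, Equiv.Perm.inv_def, Equiv.symm_apply_apply]

end TC2s2

set_option maxHeartbeats 2000000 in
/-- Case (2,s,2) with s ≥ 3: with α = (a₁ a₂ b_s … b₁) and
β = (c₁ c₂ b_s … b₁) on distinct symbols, setting
σ = α⁻¹ (β α⁻¹ β⁻¹ α) α (left-to-right), the permutation
ζ = σ ∘ (β² σ β⁻²) (left-to-right) equals the 3-cycle (b_{s-1} b₁ c₂).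
Left-to-right composition σ τ : x ↦ τ(σ(x)) corresponds to the Mathlib
product τ * σ. -/
theorem three_cycle_case_2_s_2 {X : Type*} [DecidableEq X]
    (s : ℕ) (hs : 3 ≤ s) (a1 a2 c1 c2 : X) (b : Fin s → X)
    (hdist : (a1 :: a2 :: c1 :: c2 :: List.ofFn b).Nodup) :
    let α := List.formPerm (a1 :: a2 :: (List.ofFn b).reverse)
    let β := List.formPerm (c1 :: c2 :: (List.ofFn b).reverse)
    let σ := α * (α * β⁻¹ * α⁻¹ * β) * α⁻¹   -- α⁻¹ (β α⁻¹ β⁻¹ α) α left-to-right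
    (β⁻¹ * β⁻¹ * σ * β * β) * σ =
      List.formPerm [b ⟨s - 2, by omega⟩, b ⟨0, by omega⟩, c2] := by
  intro α β σ
  have hbn : (List.ofFn b).Nodup := hdist.of_cons.of_cons.of_cons.of_cons
  have binj : Function.Injective b := List.nodup_ofFn.mp hbn
  simp only [List.nodup_cons, List.mem_cons, List.mem_ofFn, Set.mem_range] at hdist
  push_neg at hdist
  obtain ⟨⟨na12, na1c1, na1c2, nba1⟩, ⟨na2c1, na2c2, nba2⟩, ⟨nc12, nbc1⟩, nbc2, -⟩ := hdist
  have nbb : ∀ (i j : ℕ) (hi : i < s) (hj : j < s), i ≠ j → b ⟨i, hi⟩ ≠ b ⟨j, hj⟩ := by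
    intro i j hi hj hij h
    exact hij (by simpa [Fin.mk.injEq] using binj h)
  -- Nodup of the two cycle lists
  have hnA : (a1 :: a2 :: (List.ofFn b).reverse).Nodup := by
    simp only [List.nodup_cons, List.mem_cons, List.mem_reverse, List.mem_ofFn,
      Set.mem_range, List.nodup_reverse]
    push_neg
    exact ⟨⟨na12, fun y h => nba1 y h⟩, (fun y h => nba2 y h), hbn⟩
  have hnB : (c1 :: c2 :: (List.ofFn b).reverse).Nodup := by
    simp only [List.nodup_cons, List.mem_cons, List.mem_reverse, List.mem_ofFn,
      Set.mem_range, List.nodup_reverse]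
    push_neg
    exact ⟨⟨nc12, fun y h => nbc1 y h⟩, (fun y h => nbc2 y h), hbn⟩
  -- action of α
  have hA1 : α a1 = a2 := TC2s2.pi_x _ _ _ hnA
  have hA2 : α a2 = b ⟨s-1, by omega⟩ := TC2s2.pi_y _ _ _ hnA (by omega)
  have hA0 : α (b ⟨0, by omega⟩) = a1 := TC2s2.pi_b0 _ _ _ hnA (by omega)
  have hAs : ∀ (i j : ℕ) (hi : i < s) (hj : j < s), j = i + 1 →
      α (b ⟨j, hj⟩) = b ⟨i, hi⟩ := fun i j hi hj hij => TC2s2.pi_bsucc _ _ _ hnA i j hi hj hij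
  have hAc1 : α c1 = c1 := by
    apply List.formPerm_apply_of_notMem
    simp only [List.mem_cons, List.mem_reverse, List.mem_ofFn, Set.mem_range]
    push_neg
    exact ⟨fun h => na1c1 h.symm, fun h => na2c1 h.symm, fun y h => nbc1 y h⟩
  have hAc2 : α c2 = c2 := by
    apply List.formPerm_apply_of_notMem
    simp only [List.mem_cons, List.mem_reverse, List.mem_ofFn, Set.mem_range]
    push_neg
    exact ⟨fun h => na1c2 h.symm, fun h => na2c2 h.symm, fun y h => nbc2 y h⟩
  -- action of β
  have hB1 : β c1 = c2 := TC2s2.pi_x _ _ _ hnB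
  have hB2 : β c2 = b ⟨s-1, by omega⟩ := TC2s2.pi_y _ _ _ hnB (by omega)
  have hB0 : β (b ⟨0, by omega⟩) = c1 := TC2s2.pi_b0 _ _ _ hnB (by omega)
  have hBs : ∀ (i j : ℕ) (hi : i < s) (hj : j < s), j = i + 1 →
      β (b ⟨j, hj⟩) = b ⟨i, hi⟩ := fun i j hi hj hij => TC2s2.pi_bsucc _ _ _ hnB i j hi hj hij
  have hBa1 : β a1 = a1 := by
    apply List.formPerm_apply_of_notMem
    simp only [List.mem_cons, List.mem_reverse, List.mem_ofFn, Set.mem_range]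
    push_neg
    exact ⟨na1c1, na1c2, fun y h => nba1 y h⟩
  have hBa2 : β a2 = a2 := by
    apply List.formPerm_apply_of_notMem
    simp only [List.mem_cons, List.mem_reverse, List.mem_ofFn, Set.mem_range]
    push_neg
    exact ⟨na2c1, na2c2, fun y h => nba2 y h⟩
  -- inverses
  have iA1 : α⁻¹ a2 = a1 := TC2s2.inv_of _ _ _ hA1
  have iA2 : α⁻¹ (b ⟨s-1, by omega⟩) = a2 := TC2s2.inv_of _ _ _ hA2
  have iA0 : α⁻¹ a1 = b ⟨0, by omega⟩ := TC2s2.inv_of _ _ _ hA0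
  have iAs : ∀ (i j : ℕ) (hi : i < s) (hj : j < s), j = i + 1 →
      α⁻¹ (b ⟨i, hi⟩) = b ⟨j, hj⟩ := fun i j hi hj hij => TC2s2.inv_of _ _ _ (hAs i j hi hj hij)
  have iAc1 : α⁻¹ c1 = c1 := TC2s2.inv_of _ _ _ hAc1
  have iAc2 : α⁻¹ c2 = c2 := TC2s2.inv_of _ _ _ hAc2
  have iB1 : β⁻¹ c2 = c1 := TC2s2.inv_of _ _ _ hB1
  have iB2 : β⁻¹ (b ⟨s-1, by omega⟩) = c2 := TC2s2.inv_of _ _ _ hB2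
  have iB0 : β⁻¹ c1 = b ⟨0, by omega⟩ := TC2s2.inv_of _ _ _ hB0
  have iBs : ∀ (i j : ℕ) (hi : i < s) (hj : j < s), j = i + 1 →
      β⁻¹ (b ⟨i, hi⟩) = b ⟨j, hj⟩ := fun i j hi hj hij => TC2s2.inv_of _ _ _ (hBs i j hi hj hij)
  have iBa1 : β⁻¹ a1 = a1 := TC2s2.inv_of _ _ _ hBa1
  have iBa2 : β⁻¹ a2 = a2 := TC2s2.inv_of _ _ _ hBa2
  -- fixed points outside all symbols
  have hAfix : ∀ z, z ≠ a1 → z ≠ a2 → z ≠ c1 → z ≠ c2 → (∀ i, b i ≠ z) → α z = z := by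
    intro z h1 h2 h3 h4 h5
    apply List.formPerm_apply_of_notMem
    simp only [List.mem_cons, List.mem_reverse, List.mem_ofFn, Set.mem_range]
    push_neg
    exact ⟨h1, h2, h5⟩
  have hBfix : ∀ z, z ≠ a1 → z ≠ a2 → z ≠ c1 → z ≠ c2 → (∀ i, b i ≠ z) → β z = z := by
    intro z h1 h2 h3 h4 h5
    apply List.formPerm_apply_of_notMem
    simp only [List.mem_cons, List.mem_reverse, List.mem_ofFn, Set.mem_range]
    push_neg
    exact ⟨h3, h4, h5⟩
  -- value of σ at every point
  have hσz : ∀ z, σ z = Equiv.swap a1 a2 (Equiv.swap (b ⟨s-2, by omega⟩) c2 z) := by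
    intro z
    show (α * (α * β⁻¹ * α⁻¹ * β) * α⁻¹) z = _
    simp only [Equiv.Perm.mul_apply]
    by_cases h1 : z = a1
    · subst h1
      rw [iA0, hB0, iAc1, iB0, hA0, hA1,
        Equiv.swap_apply_of_ne_of_ne (fun h => nba1 _ h.symm) na1c2, Equiv.swap_apply_left]
    by_cases h2 : z = a2
    · subst h2
      rw [iA1, hBa1, iA0, iBs 0 1 (by omega) (by omega) rfl,
        hAs 0 1 (by omega) (by omega) rfl, hA0,
        Equiv.swap_apply_of_ne_of_ne (fun h => nba2 _ h.symm) na2c2, Equiv.swap_apply_right]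
    by_cases h3 : z = c1
    · subst h3
      rw [iAc1, hB1, iAc2, iB1, hAc1, hAc1,
        Equiv.swap_apply_of_ne_of_ne (fun h => nbc1 _ h.symm) nc12,
        Equiv.swap_apply_of_ne_of_ne (Ne.symm na1c1) (Ne.symm na2c1)]
    by_cases h4 : z = c2
    · subst h4
      rw [iAc2, hB2, iA2, iBa2, hA2,
        hAs (s-2) (s-1) (by omega) (by omega) (by omega),
        Equiv.swap_apply_right,
        Equiv.swap_apply_of_ne_of_ne (fun h => nba1 _ h) (fun h => nba2 _ h)]
    by_cases h5 : ∃ i : Fin s, b i = z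
    · obtain ⟨⟨i, hi⟩, rfl⟩ := h5
      by_cases hsm1 : i = s - 1
      · subst hsm1
        rw [iA2, hBa2, iA1, iBa1, hA1, hA2,
          Equiv.swap_apply_of_ne_of_ne (nbb _ _ _ _ (by omega)) (fun h => nbc2 _ h),
          Equiv.swap_apply_of_ne_of_ne (fun h => nba1 _ h) (fun h => nba2 _ h)]
      by_cases hsm2 : i = s - 2
      · subst hsm2
        rw [iAs (s-2) (s-1) (by omega) (by omega) (by omega),
          hBs (s-2) (s-1) (by omega) (by omega) (by omega),
          iAs (s-2) (s-1) (by omega) (by omega) (by omega),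
          iB2, hAc2, hAc2, Equiv.swap_apply_left,
          Equiv.swap_apply_of_ne_of_ne (Ne.symm na1c2) (Ne.symm na2c2)]
      · -- i ≤ s - 3
        rw [iAs i (i+1) (by omega) (by omega) rfl,
          hBs i (i+1) (by omega) (by omega) rfl,
          iAs i (i+1) (by omega) (by omega) rfl,
          iBs (i+1) (i+2) (by omega) (by omega) rfl,
          hAs (i+1) (i+2) (by omega) (by omega) rfl,
          hAs i (i+1) (by omega) (by omega) rfl,
          Equiv.swap_apply_of_ne_of_ne (nbb _ _ _ _ (by omega)) (fun h => nbc2 _ h),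
          Equiv.swap_apply_of_ne_of_ne (fun h => nba1 _ h) (fun h => nba2 _ h)]
    · push_neg at h5
      have hAz := hAfix z (by tauto) (by tauto) (by tauto) (by tauto) h5
      have hBz := hBfix z (by tauto) (by tauto) (by tauto) (by tauto) h5
      rw [TC2s2.inv_of _ _ _ hAz, hBz, TC2s2.inv_of _ _ _ hAz,
        TC2s2.inv_of _ _ _ hBz, hAz, hAz,
        Equiv.swap_apply_of_ne_of_ne (fun h => h5 _ h.symm) h4,
        Equiv.swap_apply_of_ne_of_ne h1 h2]
  
  -- named values of σ
  have sA1 : σ a1 = a2 := by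
    rw [hσz, Equiv.swap_apply_of_ne_of_ne (fun h => nba1 _ h.symm) na1c2, Equiv.swap_apply_left]
  have sA2 : σ a2 = a1 := by
    rw [hσz, Equiv.swap_apply_of_ne_of_ne (fun h => nba2 _ h.symm) na2c2, Equiv.swap_apply_right]
  have sC1 : σ c1 = c1 := by
    rw [hσz, Equiv.swap_apply_of_ne_of_ne (fun h => nbc1 _ h.symm) nc12,
      Equiv.swap_apply_of_ne_of_ne (Ne.symm na1c1) (Ne.symm na2c1)]
  have sC2 : σ c2 = b ⟨s-2, by omega⟩ := by
    rw [hσz, Equiv.swap_apply_right,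
      Equiv.swap_apply_of_ne_of_ne (fun h => nba1 _ h) (fun h => nba2 _ h)]
  have sBs2 : σ (b ⟨s-2, by omega⟩) = c2 := by
    rw [hσz, Equiv.swap_apply_left,
      Equiv.swap_apply_of_ne_of_ne (Ne.symm na1c2) (Ne.symm na2c2)]
  have sB : ∀ (i : ℕ) (hi : i < s), i ≠ s - 2 → σ (b ⟨i, hi⟩) = b ⟨i, hi⟩ := by
    intro i hi h
    rw [hσz, Equiv.swap_apply_of_ne_of_ne (nbb _ _ _ _ h) (fun hh => nbc2 _ hh),
      Equiv.swap_apply_of_ne_of_ne (fun hh => nba1 _ hh) (fun hh => nba2 _ hh)]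
  -- final computation
  ext z
  rw [List.formPerm_cons_cons, List.formPerm_pair]
  simp only [Equiv.Perm.mul_apply]
  by_cases h1 : z = a1
  · subst h1
    rw [sA1, hBa2, hBa2, sA2, iBa1, iBa1,
      Equiv.swap_apply_of_ne_of_ne (fun h => nba1 _ h.symm) na1c2,
      Equiv.swap_apply_of_ne_of_ne (fun h => nba1 _ h.symm) (fun h => nba1 _ h.symm)]
  by_cases h2 : z = a2
  · subst h2
    rw [sA2, hBa1, hBa1, sA1, iBa2, iBa2,
      Equiv.swap_apply_of_ne_of_ne (fun h => nba2 _ h.symm) na2c2,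
      Equiv.swap_apply_of_ne_of_ne (fun h => nba2 _ h.symm) (fun h => nba2 _ h.symm)]
  by_cases h3 : z = c1
  · subst h3
    rw [sC1, hB1, hB2, sB (s-1) (by omega) (by omega), iB2, iB1,
      Equiv.swap_apply_of_ne_of_ne (fun h => nbc1 _ h.symm) nc12,
      Equiv.swap_apply_of_ne_of_ne (fun h => nbc1 _ h.symm) (fun h => nbc1 _ h.symm)]
  by_cases h4 : z = c2
  · subst h4
    rw [sC2, hBs (s-3) (s-2) (by omega) (by omega) (by omega)]
    by_cases h3s : s = 3
    · have e30 : b ⟨s-3, by omega⟩ = b ⟨0, by omega⟩ := by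
        congr 1; simp only [Fin.mk.injEq]; omega
      have e12 : b ⟨1, by omega⟩ = b ⟨s-2, by omega⟩ := by
        congr 1; simp only [Fin.mk.injEq]; omega
      rw [e30, hB0, sC1, iB0, iBs 0 1 (by omega) (by omega) rfl, e12,
        Equiv.swap_apply_right, Equiv.swap_apply_right]
    · rw [hBs (s-4) (s-3) (by omega) (by omega) (by omega),
        sB (s-4) (by omega) (by omega),
        iBs (s-4) (s-3) (by omega) (by omega) (by omega),
        iBs (s-3) (s-2) (by omega) (by omega) (by omega),
        Equiv.swap_apply_right, Equiv.swap_apply_right]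
  by_cases h5 : ∃ i : Fin s, b i = z
  · obtain ⟨⟨i, hi⟩, rfl⟩ := h5
    by_cases hsm2 : i = s - 2
    · subst hsm2
      rw [sBs2, hB2, hBs (s-2) (s-1) (by omega) (by omega) (by omega), sBs2, iB1, iB0,
        Equiv.swap_apply_of_ne_of_ne (nbb _ _ _ _ (by omega)) (fun h => nbc2 _ h),
        Equiv.swap_apply_left]
    by_cases h0 : i = 0
    · subst h0
      rw [sB 0 hi (by omega), hB0, hB1, sC2,
        iBs (s-2) (s-1) (by omega) (by omega) (by omega), iB2,
        Equiv.swap_apply_left,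
        Equiv.swap_apply_of_ne_of_ne (fun h => nbc2 _ h.symm) (fun h => nbc2 _ h.symm)]
    by_cases hone : i = 1
    · subst hone
      rw [sB 1 hi (by omega), hBs 0 1 (by omega) (by omega) rfl, hB0, sC1, iB0,
        iBs 0 1 (by omega) (by omega) rfl,
        Equiv.swap_apply_of_ne_of_ne (nbb _ _ _ _ (by omega)) (fun h => nbc2 _ h),
        Equiv.swap_apply_of_ne_of_ne (nbb _ _ _ _ hsm2) (nbb _ _ _ _ (by omega))]
    · rw [sB i hi hsm2, hBs (i-1) i (by omega) (by omega) (by omega),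
        hBs (i-2) (i-1) (by omega) (by omega) (by omega),
        sB (i-2) (by omega) (by omega),
        iBs (i-2) (i-1) (by omega) (by omega) (by omega),
        iBs (i-1) i (by omega) (by omega) (by omega),
        Equiv.swap_apply_of_ne_of_ne (nbb _ _ _ _ (by omega)) (fun h => nbc2 _ h),
        Equiv.swap_apply_of_ne_of_ne (nbb _ _ _ _ hsm2) (nbb _ _ _ _ (by omega))]
  · push_neg at h5
    have hσfix : σ z = z := by
      rw [hσz, Equiv.swap_apply_of_ne_of_ne (fun h => h5 _ h.symm) h4,
        Equiv.swap_apply_of_ne_of_ne h1 h2]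
    have hBz := hBfix z h1 h2 h3 h4 h5
    rw [hσfix, hBz, hBz, hσfix, TC2s2.inv_of _ _ _ hBz, TC2s2.inv_of _ _ _ hBz,
      Equiv.swap_apply_of_ne_of_ne (fun h => h5 _ h.symm) h4,
      Equiv.swap_apply_of_ne_of_ne (fun h => h5 _ h.symm) (fun h => h5 _ h.symm)]
end

section
/- Let r ≥ 2, s ≥ 2, t ≥ 3, and let α = (a₁ … a_r b_s … b₁) and β = (c₁ … c_t b_s … b₁) be cyclic permutations on pairwise distinct symbols a₁,…,a_r, b₁,…,b_s, c₁,…,c_t. Then with σ := α⁻¹ (β α⁻¹ β⁻¹ α) α, the permutation σ ∘ (β² σ β⁻²) equals the 3-cycle (b_{s-1} c_{t-2} c_t). -/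
/-!
Both cycles contain the arc `b_s … b₁`. Hence `α β α⁻¹` is the cycle of `β` with `b_s` deleted and
`a₁` inserted after `b₁`, and both it and `β` are a transposition times the cycle
`K = (c₁ … c_t b_{s-1} … b₁)`. The commutator therefore collapses to the `K`-conjugate of a product
of two transpositions, `(b_s c_t)(a₁ b₁)`. The rest is conjugating disjoint transpositions: by `α`
this becomes `(b_{s-1} c_t)(a₁ a₂)`, by `β²` that becomes `(c_{t-2} c_t)(a₁ a₂)`, and the product of
the last two is `(b_{s-1} c_{t-2} c_t)`.
-/

namespace Equiv

variable {α : Type*} [DecidableEq α]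

theorem swap_apply_mul_swap_apply (f : Perm α) (x y z w : α) :
    swap (f x) (f y) * swap (f z) (f w) = f * (swap x y * swap z w) * f⁻¹ := by
  rw [swap_apply_apply, swap_apply_apply]
  group

theorem swap_mul_swap_mul_swap_mul_swap_eq_formPerm {x x' u v w : α}
    (hd : (swap x x').Disjoint (swap w v)) (h : [u, v, w].Nodup) :
    swap x x' * swap w v * (swap x x' * swap u w) = List.formPerm [u, v, w] := by
  rw [hd.commute.eq, mul_assoc, ← mul_assoc (swap x x'), swap_mul_self, one_mul,
    ← List.formPerm_rotate _ h 1]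
  simp [swap_comm]

end Equiv

namespace List

section OfFnAppendReverse

variable {α : Type*} {m k : ℕ} (f : Fin m → α) (g : Fin k → α)

theorem getElem_ofFn_append_reverse_ofFn_left {i : ℕ} (hi : i < m) :
    (ofFn f ++ (ofFn g).reverse)[i]'(by simp; omega) = f ⟨i, hi⟩ := by
  simp [getElem_append_left, hi]

theorem getElem_ofFn_append_reverse_ofFn_right {n j : ℕ} (hj : j < k)
    (hn : n = m + (k - 1 - j)) :
    (ofFn f ++ (ofFn g).reverse)[n]'(by simp; omega) = g ⟨j, hj⟩ := by
  rw [getElem_append_right (by simp; omega)]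
  simp only [getElem_reverse, List.getElem_ofFn, length_ofFn]
  congr 2
  omega

end OfFnAppendReverse

theorem Nodup.disjoint_middle {α : Type*} {p q w : List α} (h : (p ++ q ++ w).Nodup) :
    q.Disjoint (p ++ w) :=
  disjoint_of_nodup_append <| h.perm <| by
    rw [← append_assoc]
    exact perm_append_comm.append_right w

variable {α : Type*} [DecidableEq α]

theorem formPerm_append_comm {l₁ l₂ : List α} (h : (l₁ ++ l₂).Nodup) :
    formPerm (l₁ ++ l₂) = formPerm (l₂ ++ l₁) := by
  rw [← rotate_append_length_eq l₁ l₂, formPerm_rotate _ h]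

theorem formPerm_cons_eq_swap_mul (x : α) {l : List α} (hl : l ≠ []) :
    formPerm (x :: l) = Equiv.swap x (l.head hl) * formPerm l := by
  obtain ⟨y, l, rfl⟩ := exists_cons_of_ne_nil hl
  exact formPerm_cons_cons x y l

theorem formPerm_append_singleton {l : List α} {x : α} (hl : l ≠ []) (h : (x :: l).Nodup) :
    formPerm (l ++ [x]) = Equiv.swap x (l.head hl) * formPerm l := by
  rw [← formPerm_append_comm (l₁ := [x]) h, singleton_append, formPerm_cons_eq_swap_mul _ hl]

theorem formPerm_append_cons_s9 {q u : List α} {y : α} (hu : u ≠ []) (h : (q ++ y :: u).Nodup) :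
    formPerm (q ++ y :: u) = Equiv.swap y (u.head hu) * formPerm (q ++ u) := by
  rw [formPerm_append_comm h, cons_append, formPerm_cons_eq_swap_mul _ (by simp [hu]),
    head_append_of_ne_nil hu, formPerm_append_comm]
  exact nodup_append_comm.1 (h.sublist ((Sublist.refl q).append (sublist_cons_self y u)))

theorem formPerm_apply_getLast_eq_head {l : List α} (hl : l ≠ []) :
    formPerm l (l.getLast hl) = l.head hl := by
  obtain ⟨x, l, rfl⟩ := exists_cons_of_ne_nil hl
  exact formPerm_apply_getLast x l

theorem formPerm_append_apply_getLast_right {l₁ l₂ : List α} (h₁ : l₁ ≠ []) (h₂ : l₂ ≠ []) :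
    formPerm (l₁ ++ l₂) (l₂.getLast h₂) = l₁.head h₁ := by
  rw [← getLast_append_of_ne_nil (by simp [h₂]) h₂, formPerm_apply_getLast_eq_head,
    head_append_of_ne_nil h₁]

theorem formPerm_append_apply_getLast_left {l₁ l₂ : List α} (h₁ : l₁ ≠ []) (h₂ : l₂ ≠ [])
    (h : (l₁ ++ l₂).Nodup) : formPerm (l₁ ++ l₂) (l₁.getLast h₁) = l₂.head h₂ := by
  rw [formPerm_append_comm h, formPerm_append_apply_getLast_right h₂ h₁]

theorem formPerm_map (f : Equiv.Perm α) :
    ∀ l : List α, formPerm (l.map f) = f * formPerm l * f⁻¹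
  | [] => by simp
  | [x] => by simp
  | x :: y :: l => by
    rw [map_cons, map_cons, formPerm_cons_cons, ← map_cons, formPerm_map f (y :: l),
      formPerm_cons_cons, Equiv.swap_apply_apply]
    group

theorem map_formPerm_self {l : List α} (h : l.Nodup) : l.map (formPerm l) = l.rotate 1 := by
  apply ext_getElem (by simp)
  intro i hi _
  rw [getElem_map, formPerm_apply_getElem _ h, getElem_rotate]

theorem map_formPerm_cons_append_cons {x y : α} {p w : List α} (h : (x :: p ++ y :: w).Nodup) :
    (y :: w).map (formPerm (x :: p ++ y :: w)) = w ++ [x] := by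
  have hrot := map_formPerm_self h
  rw [map_append, cons_append, rotate_cons_succ, rotate_zero] at hrot
  exact (append_inj (s₂ := p ++ [y]) (hrot.trans (by simp)) (by simp)).2

theorem formPerm_pow_apply_eq_of_getElem {l : List α} (h : l.Nodup) (n : ℕ) {i j : ℕ}
    (hi : i < l.length) (hj : j < l.length) (hij : i + n = j) {x y : α} (hx : l[i] = x)
    (hy : l[j] = y) : (formPerm l ^ n) x = y := by
  rw [← hx, ← hy, formPerm_pow_apply_getElem _ h]
  simp only [hij, Nat.mod_eq_of_lt hj]

theorem formPerm_mul_formPerm_mul_inv_of_common_arc {x y : α} {p q u : List α}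
    (h : (x :: p ++ q ++ y :: u).Nodup) :
    formPerm (x :: p ++ y :: u) * formPerm (q ++ y :: u) * (formPerm (x :: p ++ y :: u))⁻¹ =
      formPerm (q ++ u ++ [x]) := by
  have hα : (x :: p ++ y :: u).Nodup :=
    h.sublist ((sublist_append_left _ q).append (Sublist.refl _))
  rw [← formPerm_map, map_append,
    map_congr_left (fun z hz => formPerm_apply_of_notMem (h.disjoint_middle hz)), map_id',
    map_formPerm_cons_append_cons hα, append_assoc]

theorem formPerm_commutator_of_common_arc {p q w : List α} (hp : p ≠ []) (hq : q ≠ [])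
    (hw : 2 ≤ w.length) (h : (p ++ q ++ w).Nodup) :
    formPerm (p ++ w) * (formPerm (q ++ w))⁻¹ * (formPerm (p ++ w))⁻¹ * formPerm (q ++ w) =
      Equiv.swap (p.head hp) (w.getLast (ne_nil_of_length_pos (by omega))) *
        Equiv.swap (w.head (ne_nil_of_length_pos (by omega))) (q.getLast hq) := by
  obtain ⟨x, p, rfl⟩ := exists_cons_of_ne_nil hp
  obtain ⟨y, u, rfl⟩ := exists_cons_of_ne_nil (ne_nil_of_length_pos (by omega) : w ≠ [])
  have hu : u ≠ [] := ne_nil_of_length_pos (by simp at hw; omega)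
  simp only [head_cons, getLast_cons hu]
  have hβ : (q ++ y :: u).Nodup := h.sublist ((sublist_append_right _ q).append (Sublist.refl _))
  have hK : (q ++ u).Nodup := hβ.sublist ((Sublist.refl q).append (sublist_cons_self y u))
  have hx : x ∉ q ++ u := by grind
  have hy : y ∉ q ++ u := by grind
  calc formPerm (x :: p ++ y :: u) * (formPerm (q ++ y :: u))⁻¹ *
        (formPerm (x :: p ++ y :: u))⁻¹ * formPerm (q ++ y :: u)
      = (formPerm (x :: p ++ y :: u) * formPerm (q ++ y :: u) *
          (formPerm (x :: p ++ y :: u))⁻¹)⁻¹ * formPerm (q ++ y :: u) := by group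
    _ = (formPerm (q ++ u))⁻¹ * (Equiv.swap x (q.head hq) * Equiv.swap y (u.head hu)) *
          formPerm (q ++ u) := by
      rw [formPerm_mul_formPerm_mul_inv_of_common_arc h,
        formPerm_append_singleton (by simp [hq]) (nodup_cons.2 ⟨hx, hK⟩),
        head_append_of_ne_nil hq, formPerm_append_cons_s9 hu hβ]
      simp only [mul_inv_rev, Equiv.swap_inv, mul_assoc]
    _ = (formPerm (q ++ u))⁻¹ * (Equiv.swap (formPerm (q ++ u) x)
          (formPerm (q ++ u) (u.getLast hu)) * Equiv.swap (formPerm (q ++ u) y)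
          (formPerm (q ++ u) (q.getLast hq))) * formPerm (q ++ u) := by
      rw [formPerm_apply_of_notMem hx, formPerm_apply_of_notMem hy,
        formPerm_append_apply_getLast_right hq hu, formPerm_append_apply_getLast_left hq hu hK]
    _ = Equiv.swap x (u.getLast hu) * Equiv.swap y (q.getLast hq) := by
      rw [Equiv.swap_apply_mul_swap_apply]
      group

end List

section CyclePair

open List Equiv

variable {X : Type*} [DecidableEq X] {r s t : ℕ} {a : Fin r → X} {b : Fin s → X} {c : Fin t → X}

theorem conj_commutator_formPerm_ofFn (hr : 2 ≤ r) (hs : 2 ≤ s) {q : List X} (hq : q ≠ [])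
    (h : (ofFn a ++ q ++ (ofFn b).reverse).Nodup) :
    let α := formPerm (ofFn a ++ (ofFn b).reverse)
    let β := formPerm (q ++ (ofFn b).reverse)
    α * (α * β⁻¹ * α⁻¹ * β) * α⁻¹ =
      swap (a ⟨1, by omega⟩) (a ⟨0, by omega⟩) * swap (b ⟨s - 2, by omega⟩) (q.getLast hq) := by
  dsimp only
  have hα : (ofFn a ++ (ofFn b).reverse).Nodup :=
    h.sublist ((sublist_append_left _ _).append (Sublist.refl _))
  have ha₀ : formPerm (ofFn a ++ (ofFn b).reverse) (a ⟨0, by omega⟩) = a ⟨1, by omega⟩ := by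
    simpa using formPerm_pow_apply_eq_of_getElem hα 1 (i := 0) (j := 1) (by simp; omega)
      (by simp; omega) rfl (getElem_ofFn_append_reverse_ofFn_left a b _)
      (getElem_ofFn_append_reverse_ofFn_left a b _)
  have hb₀ : formPerm (ofFn a ++ (ofFn b).reverse) (b ⟨0, by omega⟩) = a ⟨0, by omega⟩ := by
    have := formPerm_append_apply_getLast_right (l₁ := ofFn a) (l₂ := (ofFn b).reverse)
      (by simp; omega) (by simp; omega)
    rwa [getLast_reverse, head_ofFn, head_ofFn] at this
  have hbₛ : formPerm (ofFn a ++ (ofFn b).reverse) (b ⟨s - 1, by omega⟩) = b ⟨s - 2, by omega⟩ := by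
    simpa using formPerm_pow_apply_eq_of_getElem hα 1 (i := r) (j := r + 1) (by simp; omega)
      (by simp; omega) rfl (getElem_ofFn_append_reverse_ofFn_right a b _ (by omega))
      (getElem_ofFn_append_reverse_ofFn_right a b _ (by omega))
  have hlast : formPerm (ofFn a ++ (ofFn b).reverse) (q.getLast hq) = q.getLast hq :=
    formPerm_apply_of_notMem (h.disjoint_middle (getLast_mem hq))
  rw [formPerm_commutator_of_common_arc (by simp; omega) hq (by simp; omega) h, head_ofFn,
    head_reverse, getLast_reverse, head_ofFn, getLast_ofFn, ← swap_apply_mul_swap_apply,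
    ha₀, hb₀, hbₛ, hlast]

theorem conj_sq_formPerm_ofFn_swap_mul_swap (hs : 2 ≤ s) (ht : 3 ≤ t)
    (h : (ofFn a ++ ofFn c ++ (ofFn b).reverse).Nodup) (i i' : Fin r) :
    let β := formPerm (ofFn c ++ (ofFn b).reverse)
    β⁻¹ * β⁻¹ * (swap (a i) (a i') * swap (b ⟨s - 2, by omega⟩) (c ⟨t - 1, by omega⟩)) * β * β =
      swap (a i) (a i') * swap (c ⟨t - 1, by omega⟩) (c ⟨t - 3, by omega⟩) := by
  dsimp only
  have hβ : (ofFn c ++ (ofFn b).reverse).Nodup :=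
    h.sublist ((sublist_append_right _ _).append (Sublist.refl _))
  have hcₜ : (formPerm (ofFn c ++ (ofFn b).reverse) ^ 2) (c ⟨t - 1, by omega⟩) =
      b ⟨s - 2, by omega⟩ :=
    formPerm_pow_apply_eq_of_getElem hβ 2 (i := t - 1) (j := t + 1) (by simp; omega)
      (by simp; omega) (by omega) (getElem_ofFn_append_reverse_ofFn_left c b _)
      (getElem_ofFn_append_reverse_ofFn_right c b _ (by omega))
  have hcₜ₂ : (formPerm (ofFn c ++ (ofFn b).reverse) ^ 2) (c ⟨t - 3, by omega⟩) =
      c ⟨t - 1, by omega⟩ :=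
    formPerm_pow_apply_eq_of_getElem hβ 2 (i := t - 3) (j := t - 1) (by simp; omega)
      (by simp; omega) (by omega) (getElem_ofFn_append_reverse_ofFn_left c b _)
      (getElem_ofFn_append_reverse_ofFn_left c b _)
  have ha : ∀ j, (formPerm (ofFn c ++ (ofFn b).reverse) ^ 2) (a j) = a j := fun j =>
    Perm.pow_apply_eq_self_of_apply_eq_self (formPerm_apply_of_notMem
      (disjoint_of_nodup_append (by rwa [append_assoc] at h) (mem_ofFn.2 ⟨j, rfl⟩))) 2
  conv_lhs => rw [← ha i, ← ha i', ← hcₜ₂, ← hcₜ, swap_apply_mul_swap_apply]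
  group

end CyclePair

/-- General case (r,s,t) with r ≥ 2, s ≥ 2, t ≥ 3: with
α = (a₁ … a_r b_s … b₁) and β = (c₁ … c_t b_s … b₁) on distinct symbols,
setting σ = α⁻¹ (β α⁻¹ β⁻¹ α) α (left-to-right), the permutation
σ ∘ (β² σ β⁻²) (left-to-right) equals the 3-cycle (b_{s-1} c_{t-2} c_t).
Left-to-right composition σ τ : x ↦ τ(σ(x)) corresponds to the Mathlib
product τ * σ. -/
theorem three_cycle_case_r_s_t {X : Type*} [DecidableEq X]
    (r s t : ℕ) (hr : 2 ≤ r) (hs : 2 ≤ s) (ht : 3 ≤ t)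
    (a : Fin r → X) (b : Fin s → X) (c : Fin t → X)
    (hdist : (List.ofFn a ++ List.ofFn b ++ List.ofFn c).Nodup) :
    let α := List.formPerm (List.ofFn a ++ (List.ofFn b).reverse)
    let β := List.formPerm (List.ofFn c ++ (List.ofFn b).reverse)
    let σ := α * (α * β⁻¹ * α⁻¹ * β) * α⁻¹   -- α⁻¹ (β α⁻¹ β⁻¹ α) α left-to-right
    (β⁻¹ * β⁻¹ * σ * β * β) * σ =
      List.formPerm [b ⟨s - 2, by omega⟩, c ⟨t - 3, by omega⟩, c ⟨t - 1, by omega⟩] := by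
  intro α β σ
  have hL : (List.ofFn a ++ List.ofFn c ++ (List.ofFn b).reverse).Nodup := hdist.perm <| by
    rw [List.append_assoc, List.append_assoc]
    exact (List.perm_append_comm.trans ((List.reverse_perm _).symm.append_left _)).append_left _
  have hσ : σ = Equiv.swap (a ⟨1, by omega⟩) (a ⟨0, by omega⟩) *
      Equiv.swap (b ⟨s - 2, by omega⟩) (c ⟨t - 1, by omega⟩) := by
    have := conj_commutator_formPerm_ofFn hr hs (q := List.ofFn c) (by simp; omega) hL
    rwa [List.getLast_ofFn] at this
  have hτ : β⁻¹ * β⁻¹ * σ * β * β = Equiv.swap (a ⟨1, by omega⟩) (a ⟨0, by omega⟩) *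
      Equiv.swap (c ⟨t - 1, by omega⟩) (c ⟨t - 3, by omega⟩) := by
    rw [hσ]
    exact conj_sq_formPerm_ofFn_swap_mul_swap hs ht hL _ _
  rw [hτ, hσ]
  simp only [List.nodup_append, List.nodup_ofFn, List.mem_append, List.mem_ofFn,
    forall_exists_index, forall_apply_eq_imp_iff] at hdist
  obtain ⟨⟨ha, -, -⟩, hc, habc⟩ := hdist
  refine Equiv.swap_mul_swap_mul_swap_mul_swap_eq_formPerm (Equiv.Perm.disjoint_swap_swap ?_) ?_
  · simp [ha.eq_iff, hc.eq_iff, fun i => habc _ (.inl ⟨i, rfl⟩), Fin.ext_iff]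
    omega
  · simp [hc.eq_iff, fun i => habc _ (.inr ⟨i, rfl⟩), Fin.ext_iff]
    omega
end

section
/- Let α = (a₁ b₃ b₂ b₁) and β = (c₁ c₂ b₃ b₂ b₁) be cyclic permutations on the six distinct symbols a₁, b₁, b₂, b₃, c₁, c₂. Then the group generated by α and β contains no 3-cycle. -/
/-!
The five perfect matchings `{01, 24, 35}, {02, 13, 45}, {03, 14, 25}, {04, 15, 23}, {05, 12, 34}`
of six points form a synthematic total, and both generators preserve it. Its stabiliser in `S₆`
is the exotic transitive `S₅ ≅ PGL(2, 5)`, whose nontrivial elements fix at most two points, so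
no 3-cycle preserves the total; this is checked by running through the 3-cycles of `Fin 6`.
Numbering `a, b1, b2, b3, c1, c2` as `0, …, 5` and extending permutations of `Fin 6` to `X`,
which preserves cycle types, transports the statement to `X`.
-/

open Equiv Equiv.Perm
open scoped Pointwise

namespace Equiv.Perm

variable {α β : Type*} [DecidableEq α] [DecidableEq β] {p : β → Prop} [DecidablePred p]

theorem extendDomain_swap (f : α ≃ Subtype p) (x y : α) :
    (swap x y).extendDomain f = swap (f x : β) (f y) := by
  ext b
  by_cases hb : p b
  · obtain ⟨a, rfl⟩ : ∃ a, (f a : β) = b := ⟨f.symm ⟨b, hb⟩, by simp⟩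
    rw [extendDomain_apply_image]
    exact ((Subtype.coe_injective.comp f.injective).swap_apply x y a).symm
  · have hx : (f x : β) ≠ b := fun h => hb (h ▸ (f x).2)
    have hy : (f y : β) ≠ b := fun h => hb (h ▸ (f y).2)
    rw [extendDomain_apply_not_subtype _ _ hb, swap_apply_of_ne_of_ne hx.symm hy.symm]

theorem formPerm_map_eq_extendDomain (f : α ≃ Subtype p) :
    ∀ l : List α, (l.map fun x => (f x : β)).formPerm = l.formPerm.extendDomain f
  | [] | [_] => (extendDomain_one f).symm
  | x :: y :: l => by
    simp only [List.map_cons, List.formPerm_cons_cons, ← extendDomain_mul, extendDomain_swap]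
    exact congrArg _ (formPerm_map_eq_extendDomain f (y :: l))

theorem isThreeCycle_extendDomain_iff [Fintype α] [Fintype β] (f : α ≃ Subtype p)
    {σ : Perm α} : (σ.extendDomain f).IsThreeCycle ↔ σ.IsThreeCycle := by
  simp only [IsThreeCycle, cycleType_extendDomain]

theorem IsThreeCycle.exists_eq_formPerm [Fintype α] {σ : Perm α} (h : σ.IsThreeCycle) :
    ∃ x y z, [x, y, z].Nodup ∧ σ = [x, y, z].formPerm := by
  obtain ⟨x, hx⟩ := Finset.card_pos.mp (h.card_support.symm ▸ three_pos : 0 < σ.support.card)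
  refine ⟨x, σ x, σ (σ x), h.nodup_iff_mem_support.mpr hx, ?_⟩
  rw [List.formPerm_cons_cons, List.formPerm_pair]
  exact h.eq_swap_mul_swap_iff_mem_support.mpr hx

end Equiv.Perm

def synthematicTotal : Finset (Finset (Finset (Fin 6))) :=
  { {{0, 1}, {2, 4}, {3, 5}}, {{0, 2}, {1, 3}, {4, 5}}, {{0, 3}, {1, 4}, {2, 5}},
    {{0, 4}, {1, 5}, {2, 3}}, {{0, 5}, {1, 2}, {3, 4}} }

theorem closure_le_stabilizer_synthematicTotal :
    Subgroup.closure {[0, 3, 2, 1].formPerm, [4, 5, 3, 2, 1].formPerm} ≤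
      MulAction.stabilizer (Perm (Fin 6)) synthematicTotal := by
  rw [Subgroup.closure_le, Set.insert_subset_iff, Set.singleton_subset_iff]
  exact ⟨MulAction.mem_stabilizer_iff.mpr (by decide),
    MulAction.mem_stabilizer_iff.mpr (by decide)⟩

theorem formPerm_smul_synthematicTotal_ne (x y z : Fin 6) (h : [x, y, z].Nodup) :
    [x, y, z].formPerm • synthematicTotal ≠ synthematicTotal := by
  revert x y z
  decide

theorem not_isThreeCycle_of_mem_stabilizer_synthematicTotal {σ : Perm (Fin 6)}
    (hσ : σ ∈ MulAction.stabilizer (Perm (Fin 6)) synthematicTotal) : ¬σ.IsThreeCycle := by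
  intro h
  obtain ⟨x, y, z, hxyz, rfl⟩ := h.exists_eq_formPerm
  exact formPerm_smul_synthematicTotal_ne x y z hxyz hσ

theorem not_isThreeCycle_of_mem_closure_fin_six {σ : Perm (Fin 6)}
    (hσ : σ ∈ Subgroup.closure {[0, 3, 2, 1].formPerm, [4, 5, 3, 2, 1].formPerm}) :
    ¬σ.IsThreeCycle :=
  not_isThreeCycle_of_mem_stabilizer_synthematicTotal (closure_le_stabilizer_synthematicTotal hσ)

/-- T₀-pair of type (1,3,2): the group generated by α = (a₁ b₃ b₂ b₁) and
β = (c₁ c₂ b₃ b₂ b₁) on six distinct symbols contains no 3-cycle. -/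
theorem t0_pair_132_no_three_cycle {X : Type*} [Fintype X] [DecidableEq X]
    (a b1 b2 b3 c1 c2 : X)
    (hdist : ([a, b1, b2, b3, c1, c2] : List X).Nodup) :
    let α := List.formPerm [a, b3, b2, b1]
    let β := List.formPerm [c1, c2, b3, b2, b1]
    ∀ σ ∈ Subgroup.closure {α, β}, ¬ Equiv.Perm.IsThreeCycle σ := by
  intro α β σ hσ
  let e := hdist.getEquiv
  have hα : extendDomainHom e [0, 3, 2, 1].formPerm = α :=
    (formPerm_map_eq_extendDomain e _).symm
  have hβ : extendDomainHom e [4, 5, 3, 2, 1].formPerm = β :=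
    (formPerm_map_eq_extendDomain e _).symm
  rw [← hα, ← hβ, ← Set.image_pair, ← MonoidHom.map_closure] at hσ
  obtain ⟨τ, hτ, rfl⟩ := hσ
  rw [extendDomainHom_apply, isThreeCycle_extendDomain_iff]
  exact not_isThreeCycle_of_mem_closure_fin_six hτ
end

section
/- Let α = (a₁ a₂ b₂ b₁) and β = (c₁ c₂ b₂ b₁) be cyclic permutations on the six distinct symbols a₁, a₂, b₁, b₂, c₁, c₂. Then the group generated by α and β contains no 3-cycle. -/
/-!
The six points carry a synthematic total, i.e. a 1-factorization of K₆ into five perfect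
matchings, and α and β permute its factors (they generate the transitive copy of S₅ ≅ PGL(2,5)
that stabilizes the total). If a permutation preserving the factorization fixes three points
u, v, w, it also fixes the partner of w in the factor through {u, v}, which is a fourth point.
A 3-cycle of six points fixes exactly three.
-/

open Function

namespace List

theorem formPerm_map_apply {α β : Type*} [DecidableEq α] [DecidableEq β] {g : α → β}
    (hg : Injective g) (l : List α) (a : α) :
    formPerm (l.map g) (g a) = g (formPerm l a) := by
  induction l with
  | nil => rfl
  | cons x t ih =>
    cases t with
    | nil => rfl
    | cons y t =>
      simp only [map_cons, formPerm_cons_cons, Equiv.Perm.coe_mul, comp_apply] at ih ⊢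
      rw [ih, hg.swap_apply]

end List

namespace Equiv.Perm

variable {X ι : Type*}

theorem extendDomain_formPerm {α : Type*} [DecidableEq α] [DecidableEq X] {p : X → Prop}
    [DecidablePred p] (f : α ≃ Subtype p) (l : List α) :
    (l.formPerm).extendDomain f = (l.map fun a => (f a : X)).formPerm := by
  have hf : Injective fun a => (f a : X) := Subtype.val_injective.comp f.injective
  ext x
  by_cases hx : p x
  · obtain ⟨a, ha⟩ := f.surjective ⟨x, hx⟩
    obtain rfl : (f a : X) = x := congrArg Subtype.val ha
    rw [extendDomain_apply_image, List.formPerm_map_apply hf]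
  · rw [extendDomain_apply_not_subtype _ _ hx, List.formPerm_apply_of_notMem]
    simp only [List.mem_map, not_exists, not_and]
    exact fun a _ h => hx (h ▸ (f a).2)

def edgeColoringAut (c : X → X → ι) : Subgroup (Perm X) where
  carrier := {σ | ∀ a b a' b', c (σ a) (σ b) = c (σ a') (σ b') ↔ c a b = c a' b'}
  mul_mem' {σ τ} hσ hτ a b a' b' := (hσ _ _ _ _).trans (hτ a b a' b')
  one_mem' _ _ _ _ := Iff.rfl
  inv_mem' {σ} hσ a b a' b' := by
    simpa only [coe_inv, apply_symm_apply] using (hσ (σ⁻¹ a) (σ⁻¹ b) (σ⁻¹ a') (σ⁻¹ b')).symm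

theorem mem_edgeColoringAut {c : X → X → ι} {σ : Perm X} :
    σ ∈ edgeColoringAut c ↔ ∀ a b a' b', c (σ a) (σ b) = c (σ a') (σ b') ↔ c a b = c a' b' :=
  Iff.rfl

theorem apply_eq_self_of_mem_edgeColoringAut {c : X → X → ι} {σ : Perm X}
    (hσ : σ ∈ edgeColoringAut c) {u v w t : X} (hw : Injective (c w))
    (hu : σ u = u) (hv : σ v = v) (hwσ : σ w = w) (ht : c w t = c u v) : σ t = t := by
  apply hw
  have := (hσ w t u v).mpr ht
  rwa [hu, hv, hwσ, ← ht] at this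

theorem not_isThreeCycle_of_mem_edgeColoringAut [Fintype X] [DecidableEq X]
    (hX : Fintype.card X = 6) {c : X → X → ι} (hc : ∀ w, Injective (c w))
    (hpartner : ∀ u v w, u ≠ v → u ≠ w → v ≠ w →
      ∃ t, c w t = c u v ∧ t ≠ u ∧ t ≠ v ∧ t ≠ w)
    {σ : Perm X} (hσ : σ ∈ edgeColoringAut c) : ¬ σ.IsThreeCycle := by
  intro h3
  have hcompl : σ.supportᶜ.card = 3 := by rw [Finset.card_compl, hX, h3.card_support]
  obtain ⟨u, v, w, huv, huw, hvw, hfix⟩ := Finset.card_eq_three.mp hcompl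
  have fixed : ∀ x ∈ ({u, v, w} : Finset X), σ x = x := fun x hx => by
    rw [← hfix, Finset.mem_compl] at hx
    exact notMem_support.mp hx
  obtain ⟨t, ht, htu, htv, htw⟩ := hpartner u v w huv huw hvw
  have hmoved : t ∈ σ.support := by
    rw [← Finset.notMem_compl, hfix]
    simp [htu, htv, htw]
  exact mem_support.mp hmoved <| apply_eq_self_of_mem_edgeColoringAut hσ (hc w)
    (fixed u (by simp)) (fixed v (by simp)) (fixed w (by simp)) ht

end Equiv.Perm

namespace T0Pair222

open Equiv Perm

/-- Colour `k ≥ 1` marks the `k`-th syntheme of the total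
`{01,25,34}, {05,13,24}, {02,14,35}, {03,12,45}, {04,15,23}`; colour `0` marks the diagonal. -/
def totalColoring : Fin 6 → Fin 6 → Fin 6 :=
  ![![0, 1, 3, 4, 5, 2],
    ![1, 0, 4, 2, 3, 5],
    ![3, 4, 0, 5, 2, 1],
    ![4, 2, 5, 0, 1, 3],
    ![5, 3, 2, 1, 0, 4],
    ![2, 5, 1, 3, 4, 0]]

theorem totalColoring_injective : ∀ w, Injective (totalColoring w) := by decide

theorem exists_totalColoring_partner : ∀ u v w, u ≠ v → u ≠ w → v ≠ w →
    ∃ t, totalColoring w t = totalColoring u v ∧ t ≠ u ∧ t ≠ v ∧ t ≠ w := by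
  decide

-- `α` and `β` on the labels `a₁ a₂ b₁ b₂ c₁ c₂ = 0 1 2 3 4 5`.
def A : Perm (Fin 6) := List.formPerm [0, 1, 3, 2]

def B : Perm (Fin 6) := List.formPerm [4, 5, 3, 2]

theorem closure_le_edgeColoringAut : Subgroup.closure {A, B} ≤ edgeColoringAut totalColoring := by
  rw [Subgroup.closure_le, Set.insert_subset_iff, Set.singleton_subset_iff]
  constructor <;> rw [SetLike.mem_coe, mem_edgeColoringAut] <;> decide

end T0Pair222

open T0Pair222 in
/-- T₀-pair of type (2,2,2): the group generated by α = (a₁ a₂ b₂ b₁) and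
β = (c₁ c₂ b₂ b₁) on six distinct symbols contains no 3-cycle. -/
theorem t0_pair_222_no_three_cycle {X : Type*} [Fintype X] [DecidableEq X]
    (a1 a2 b1 b2 c1 c2 : X)
    (hdist : ([a1, a2, b1, b2, c1, c2] : List X).Nodup) :
    let α := List.formPerm [a1, a2, b2, b1]
    let β := List.formPerm [c1, c2, b2, b1]
    ∀ σ ∈ Subgroup.closure {α, β}, ¬ Equiv.Perm.IsThreeCycle σ := by
  intro α β σ hσ h3
  let v : Fin 6 → X := ![a1, a2, b1, b2, c1, c2]
  have hv : Injective v := List.nodup_ofFn.mp hdist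
  let Φ := Equiv.Perm.extendDomainHom (Equiv.ofInjective v hv)
  have hclosure : Subgroup.closure {α, β} = (Subgroup.closure {A, B}).map Φ := by
    rw [MonoidHom.map_closure, Set.image_pair]
    simp only [Φ, Equiv.Perm.extendDomainHom_apply, A, B, Equiv.Perm.extendDomain_formPerm]
    rfl
  rw [hclosure] at hσ
  obtain ⟨τ, hτ, rfl⟩ := Subgroup.mem_map.mp hσ
  refine Equiv.Perm.not_isThreeCycle_of_mem_edgeColoringAut (Fintype.card_fin 6)
    totalColoring_injective exists_totalColoring_partner (closure_le_edgeColoringAut hτ) ?_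
  simpa only [Equiv.Perm.IsThreeCycle, Φ, Equiv.Perm.extendDomainHom_apply,
    Equiv.Perm.cycleType_extendDomain] using h3
end

section
/- Let α = (a₁ b₃ b₂ b₁), β = (c₁ c₂ b₃ b₂ b₁), and γ = (e₁ c₂ b₃ b₂) be cyclic permutations on the seven distinct symbols a₁, b₁, b₂, b₃, c₁, c₂, e₁. Then the product β α β⁻¹ γ⁻¹ is a 3-cycle. -/
/-!
Conjugating α by β relabels its cycle to (a₁ c₂ b₃ b₂), which shares the path c₂ b₃ b₂ with γ.
Two cycles sharing everything but their first point differ by transpositions through the second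
point, so γ⁻¹ β⁻¹ α β is conjugate to (c₂ e₁)(c₂ a₁), a 3-cycle.
-/

open Equiv Equiv.Perm

theorem List.formPerm_map_s17 {α : Type*} [DecidableEq α] (σ : Equiv.Perm α) :
    ∀ l : List α, formPerm (l.map σ) = σ * formPerm l * σ⁻¹
  | [] | [_] => by simp
  | x :: y :: l => by
    rw [map_cons, map_cons, formPerm_cons_cons, ← map_cons, formPerm_map_s17 σ (y :: l),
      formPerm_cons_cons, swap_apply_apply]
    group

theorem Equiv.Perm.IsThreeCycle.conj {α : Type*} [Fintype α] [DecidableEq α] {f : Perm α}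
    (hf : IsThreeCycle f) (σ : Perm α) : IsThreeCycle (σ * f * σ⁻¹) := by
  rwa [IsThreeCycle, cycleType_conj]

theorem List.isThreeCycle_formPerm_inv_mul_formPerm {α : Type*} [Fintype α] [DecidableEq α]
    {x y z : α} (l : List α) (hxy : x ≠ y) (hxz : x ≠ z) (hyz : y ≠ z) :
    IsThreeCycle ((formPerm (x :: z :: l))⁻¹ * formPerm (y :: z :: l)) := by
  have h := (isThreeCycle_swap_mul_swap_same hxz.symm hyz.symm hxy).conj (formPerm (z :: l))⁻¹
  rw [inv_inv, Equiv.swap_comm z x, Equiv.swap_comm z y] at h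
  simpa only [formPerm_cons_cons, mul_inv_rev, swap_inv, mul_assoc] using h

/-- Extension (a) of the (1,3,2) T₀-pair: with α = (a₁ b₃ b₂ b₁),
β = (c₁ c₂ b₃ b₂ b₁) and γ = (e₁ c₂ b₃ b₂) on seven distinct symbols, the
left-to-right product β α β⁻¹ γ⁻¹ is a 3-cycle.  Left-to-right composition
σ τ : x ↦ τ(σ(x)) corresponds to the Mathlib product τ * σ. -/
theorem t0_extension_three_cycle {X : Type*} [Fintype X] [DecidableEq X]
    (a b1 b2 b3 c1 c2 e1 : X)
    (hdist : ([a, b1, b2, b3, c1, c2, e1] : List X).Nodup) :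
    let α := List.formPerm [a, b3, b2, b1]
    let β := List.formPerm [c1, c2, b3, b2, b1]
    let γ := List.formPerm [e1, c2, b3, b2]
    Equiv.Perm.IsThreeCycle (γ⁻¹ * β⁻¹ * α * β) := by
  intro α β γ
  simp only [List.nodup_cons, List.mem_cons, List.not_mem_nil, or_false, not_or,
    List.nodup_nil, and_true] at hdist
  obtain ⟨⟨hab1, hab2, hab3, hac1, hac2, hae1⟩, ⟨hb1b2, hb1b3, hb1c1, hb1c2, -⟩,
    ⟨hb2b3, hb2c1, hb2c2, -⟩, ⟨hb3c1, hb3c2, -⟩, ⟨hc1c2, -⟩, hc2e1, -⟩ := hdist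
  have hβ : [c1, c2, b3, b2, b1].Nodup := by simp [*, eq_comm]
  have hβa : β a = a := List.formPerm_apply_of_notMem (by simp [*])
  have hβc2 : β c2 = b3 := List.formPerm_apply_lt_getElem _ hβ 1 (by simp)
  have hβb3 : β b3 = b2 := List.formPerm_apply_lt_getElem _ hβ 2 (by simp)
  have hβb2 : β b2 = b1 := List.formPerm_apply_lt_getElem _ hβ 3 (by simp)
  have hconj : β⁻¹ * α * β = List.formPerm [a, c2, b3, b2] := by
    have : α = β * List.formPerm [a, c2, b3, b2] * β⁻¹ := by
      rw [← List.formPerm_map_s17]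
      simp only [List.map_cons, List.map_nil, hβa, hβc2, hβb3, hβb2, α]
    rw [this]
    group
  rw [mul_assoc, mul_assoc, ← mul_assoc β⁻¹, hconj]
  exact List.isThreeCycle_formPerm_inv_mul_formPerm [b3, b2] (Ne.symm hae1) (Ne.symm hc2e1) hac2
end
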